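/- arXiv:0909.2601 — 7 statements merged into one kernel-verified Lean document; each statement's English description precedes it below -/
import Mathlib

section
/- Fine-grained no-signalling for arbitrary measurements: if for every single-party effect R₁ on system A (a nonnegative vector with R₁(a|x) ≤ 1 such that {R₁(a|x), δ-complement} is part of a valid local measurement) a bipartite no-signalling box P is such that the induced distribution on Bob's outcomes ∑_a R₁-weighted probabilities is well-defined, then for any two complete local measurements {R_r} and {R'_s} on A (∑_r R_r(a|x) giving unit total probability on all single-system states), the induced marginal distribution on B is the same: ∑_r ∑_{a,x} R_r(a|x) P(a,b|x,y) is independent of which complete measurement {R_r} is used, and equals ∑_a P(a,b|x₀,y) for any fiducial x₀. -/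
/-- Fine-grained no-signalling for arbitrary measurements: performing any
complete local measurement `{R_r}` on Alice's side of a bipartite
no-signalling box yields Bob's marginal independent of the choice of
measurement, and equal to the fiducial marginal `∑_a P(a,b|x₀,y)`. -/
theorem complete_measurement_no_signalling
    {A B X Y : Type*} [Fintype A] [Fintype B] [Fintype X] [Fintype Y]
    {I : Type*} [Fintype I]
    (P : A → B → X → Y → ℝ)
    (hPpos : ∀ a b x y, 0 ≤ P a b x y)
    (hPnorm : ∀ x y, ∑ a, ∑ b, P a b x y = 1)
    (hNSB : ∀ a x y y', ∑ b, P a b x y = ∑ b, P a b x y')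
    (hNSA : ∀ b x x' y, ∑ a, P a b x y = ∑ a, P a b x' y)
    (R : I → A → X → ℝ)
    (hRpos : ∀ r a x, 0 ≤ R r a x)
    (hRcomplete : ∀ Q : A → X → ℝ, (∀ a x, 0 ≤ Q a x) → (∀ x, ∑ a, Q a x = 1) →
      ∑ r, ∑ x, ∑ a, R r a x * Q a x = 1) :
    ∀ (b : B) (y : Y) (x₀ : X),
      ∑ r, ∑ x, ∑ a, R r a x * P a b x y = ∑ a, P a b x₀ y := by
  classical
  intro b y x₀
  -- A is nonempty
  have hA : Nonempty A := by
    by_contra h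
    rw [not_nonempty_iff] at h
    have := hPnorm x₀ y
    simp at this
  obtain ⟨a₀⟩ := hA
  set S : A → X → ℝ := fun a x => ∑ r, R r a x with hS
  -- For any deterministic assignment g : X → A, ∑_x S (g x) x = 1
  have hdet : ∀ g : X → A, ∑ x, S (g x) x = 1 := by
    intro g
    have := hRcomplete (fun a x => if a = g x then 1 else 0)
      (fun a x => by positivity) (fun x => by simp)
    have h2 : ∑ r, ∑ x, ∑ a, R r a x * (if a = g x then 1 else 0)
        = ∑ r, ∑ x, R r (g x) x := by
      refine Finset.sum_congr rfl fun r _ => Finset.sum_congr rfl fun x _ => ?_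
      simp [Finset.sum_ite_eq']
    rw [h2] at this
    rw [Finset.sum_comm] at this
    exact this
  -- S is constant in a
  have hconst : ∀ a x, S a x = S a₀ x := by
    intro a x
    have h1 := hdet (Function.update (fun _ => a₀) x a)
    have h2 := hdet (fun _ => a₀)
    rw [← Finset.add_sum_erase _ _ (Finset.mem_univ x)] at h1 h2
    have herase : ∑ x' ∈ Finset.univ.erase x, S ((Function.update (fun _ => a₀) x a) x') x'
        = ∑ x' ∈ Finset.univ.erase x, S a₀ x' := by
      refine Finset.sum_congr rfl fun x' hx' => ?_
      rw [Function.update_of_ne (Finset.mem_erase.mp hx').1]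
    rw [herase, Function.update_self] at h1
    linarith
  have hsum1 : ∑ x, S a₀ x = 1 := hdet (fun _ => a₀)
  -- rewrite the goal
  rw [Finset.sum_comm]
  have hstep : ∀ x, ∑ r, ∑ a, R r a x * P a b x y = S a₀ x * ∑ a, P a b x₀ y := by
    intro x
    rw [Finset.sum_comm]
    have : ∀ a, ∑ r, R r a x * P a b x y = S a₀ x * P a b x y := by
      intro a
      rw [← Finset.sum_mul]
      exact congrArg (fun t => t * P a b x y) (hconst a x)
    simp_rw [this]
    rw [← Finset.mul_sum, hNSA b x x₀ y]
  simp_rw [hstep]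
  rw [← Finset.sum_mul, hsum1, one_mul]
end

section
/- If a nonnegative bipartite array M(a,b|x,y) satisfies M·P = c (the same constant c) for every deterministic product state P, then for any fixed x*, any outcomes a, a', and any choice function b_y picking an outcome for each y: ∑_y M(a, b_y | x*, y) = ∑_y M(a', b_y | x*, y). In particular, if M(a, b_y | x*, y) = 0 for all y, then M(a', b_y | x*, y) = 0 for all y and all a'. -/
/-- The key swapping lemma: if a nonnegative bipartite array `M(a,b|x,y)` has
the same value `M·P = c` on every deterministic product state, then for any
fixed `x*`, any outcomes `a, a'`, and any choice `b_y` of an outcome for each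
`y`, the sums `∑_y M(a, b_y|x*, y)` and `∑_y M(a', b_y|x*, y)` agree.
In particular if one of them vanishes termwise, so does the other. -/
theorem swapping_lemma
    {A B X Y : Type*} [Fintype A] [Fintype B] [Fintype X] [Fintype Y]
    [DecidableEq A] [DecidableEq B] [Nonempty A] [Nonempty B]
    (M : A → B → X → Y → ℝ)
    (hMpos : ∀ a b x y, 0 ≤ M a b x y)
    (c : ℝ)
    (hM : ∀ (f : X → A) (g : Y → B),
      ∑ x, ∑ y, M (f x) (g y) x y = c) :
    (∀ (x' : X) (a a' : A) (by_ : Y → B),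
        ∑ y, M a (by_ y) x' y = ∑ y, M a' (by_ y) x' y) ∧
    (∀ (x' : X) (a a' : A) (by_ : Y → B),
        (∀ y, M a (by_ y) x' y = 0) → ∀ y, M a' (by_ y) x' y = 0) := by
  classical
  have key : ∀ (x' : X) (a a' : A) (by_ : Y → B),
      ∑ y, M a (by_ y) x' y = ∑ y, M a' (by_ y) x' y := by
    intro x' a a' by_
    set f : X → A := fun x => if x = x' then a else Classical.arbitrary A with hf
    set f' : X → A := Function.update f x' a' with hf'
    have h1 := hM f by_
    have h2 := hM f' by_
    have e1 : ∑ x, ∑ y, M (f x) (by_ y) x y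
        = (∑ y, M a (by_ y) x' y) + ∑ x ∈ Finset.univ.erase x', ∑ y, M (f x) (by_ y) x y := by
      rw [← Finset.add_sum_erase _ _ (Finset.mem_univ x')]
      simp [hf]
    have e2 : ∑ x, ∑ y, M (f' x) (by_ y) x y
        = (∑ y, M a' (by_ y) x' y) + ∑ x ∈ Finset.univ.erase x', ∑ y, M (f x) (by_ y) x y := by
      rw [← Finset.add_sum_erase _ _ (Finset.mem_univ x')]
      congr 1
      · simp [hf', Function.update_self]
      · refine Finset.sum_congr rfl fun x hx => ?_
        have : x ≠ x' := Finset.ne_of_mem_erase hx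
        simp [hf', Function.update_of_ne this]
    have := e1.symm.trans (h1.trans (h2.symm.trans e2))
    linarith
  refine ⟨key, ?_⟩
  intro x' a a' by_ h0 y
  have hsum : ∑ y, M a' (by_ y) x' y = 0 := by
    rw [← key x' a a' by_]
    simp [h0]
  have := Finset.sum_eq_zero_iff_of_nonneg
    (fun y _ => hMpos a' (by_ y) x' y) |>.mp hsum
  exact this y (Finset.mem_univ y)
end

section
/- Every total measurement array for a bipartite box-world system can be written as a convex combination of total measurement arrays of basic measurements. Concretely: if M(a,b|x,y) is a nonnegative array such that M·P = 1 for all bipartite no-signalling states P, then M = ∑_i q_i M_i where q_i ≥ 0, ∑_i q_i = 1, and each M_i is the total measurement array of a basic measurement (either M_i(a,b|x,y) = δ_{x,x*} δ_{y,y_a} for some x* and function a ↦ y_a, or M_i(a,b|x,y) = δ_{y,y*} δ_{x,x_b} for some y* and function b ↦ x_b). -/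
section Aux

/-- If two functions have equal sums and agree off one point, they agree at that point. -/
lemma single_of_sum_eq {ι : Type*} [Fintype ι] [DecidableEq ι] {F G : ι → ℝ} (i : ι)
    (h : ∑ j, F j = ∑ j, G j) (h' : ∀ j, j ≠ i → F j = G j) : F i = G i := by
  have hF := Finset.add_sum_erase Finset.univ F (Finset.mem_univ i)
  have hG := Finset.add_sum_erase Finset.univ G (Finset.mem_univ i)
  have he : ∑ j ∈ Finset.univ.erase i, F j = ∑ j ∈ Finset.univ.erase i, G j :=
    Finset.sum_congr rfl fun j hj => h' j (Finset.mem_erase.1 hj).1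
  have := hF.trans (h.trans hG.symm)
  rw [he] at this
  linarith

/-- Sum over all functions with value at `a` pinned. -/
lemma sum_pi_pin {A Y : Type*} [Fintype A] [Fintype Y] [DecidableEq A] [DecidableEq Y]
    (ρ : A → Y → ℝ) (hρ : ∀ a', ∑ y, ρ a' y = 1) (a : A) (y : Y) :
    ∑ f : A → Y, (if f a = y then (1:ℝ) else 0) * ∏ a', ρ a' (f a') = ρ a y := by
  have key : ∀ f : A → Y, (if f a = y then (1:ℝ) else 0) * ∏ a', ρ a' (f a')
      = ∏ a', (if a' = a then (if f a' = y then ρ a' (f a') else 0) else ρ a' (f a')) := by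
    intro f
    by_cases h : f a = y
    · rw [if_pos h, one_mul]
      refine Finset.prod_congr rfl fun a' _ => ?_
      by_cases ha : a' = a
      · subst ha; simp [h]
      · simp [ha]
    · rw [if_neg h, zero_mul]
      symm
      apply Finset.prod_eq_zero (Finset.mem_univ a)
      simp [h]
  rw [Finset.sum_congr rfl fun f _ => key f]
  have hpiu : (Fintype.piFinset fun _ : A => (Finset.univ : Finset Y)) = Finset.univ :=
    Fintype.piFinset_univ
  rw [← hpiu, ← Finset.prod_univ_sum (fun _ => (Finset.univ : Finset Y))
      (fun a' y' => if a' = a then (if y' = y then ρ a' y' else 0) else ρ a' y')]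
  rw [Fintype.prod_eq_single a (fun a' ha' => by simp [ha', hρ a'])]
  simp

/-- One-sided decomposition: a nonnegative array whose `y`-row-sums do not depend
on `a` is a (sub)convex combination of pinned basic arrays. -/
lemma decomp_side {A X Y : Type*} [Fintype A] [Fintype X] [Fintype Y]
    [DecidableEq A] [DecidableEq X] [DecidableEq Y] [Nonempty A] [Nonempty Y]
    (F : A → X → Y → ℝ) (c : X → ℝ)
    (hF : ∀ a x y, 0 ≤ F a x y) (hc : ∀ a x, ∑ y, F a x y = c x) :
    ∃ q : X × (A → Y) → ℝ, (∀ p, 0 ≤ q p) ∧ (∑ p, q p = ∑ x, c x) ∧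
      ∀ a x y, (∑ p : X × (A → Y), q p * (if x = p.1 ∧ y = p.2 a then 1 else 0)) = F a x y := by
  classical
  set y! : Y := Classical.arbitrary Y with hy!
  have hcnn : ∀ x, 0 ≤ c x := fun x => (hc (Classical.arbitrary A) x) ▸
    Finset.sum_nonneg fun y _ => hF _ x y
  set ρ : A → X → Y → ℝ := fun a x y => if c x = 0 then (if y = y! then 1 else 0)
    else F a x y / c x with hρdef
  have hρ1 : ∀ a x, ∑ y, ρ a x y = 1 := by
    intro a x
    by_cases h : c x = 0
    · simp [hρdef, h]
    · simp only [hρdef, if_neg h]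
      rw [← Finset.sum_div, hc a x, div_self h]
  have hρ0 : ∀ a x y, 0 ≤ ρ a x y := by
    intro a x y
    by_cases h : c x = 0
    · simp only [hρdef, if_pos h]; positivity
    · simp only [hρdef, if_neg h]
      exact div_nonneg (hF a x y) (hcnn x)
  have hFρ : ∀ a x y, F a x y = c x * ρ a x y := by
    intro a x y
    by_cases h : c x = 0
    · have h0 : ∑ y, F a x y = 0 := by rw [hc a x, h]
      have := (Finset.sum_eq_zero_iff_of_nonneg (fun y _ => hF a x y)).1 h0 y (Finset.mem_univ y)
      rw [this, h, zero_mul]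
    · simp only [hρdef, if_neg h]
      rw [mul_div_cancel₀ _ h]
  refine ⟨fun p => c p.1 * ∏ a, ρ a p.1 (p.2 a), fun p => ?_, ?_, ?_⟩
  · exact mul_nonneg (hcnn p.1) (Finset.prod_nonneg fun a _ => hρ0 a p.1 (p.2 a))
  · rw [Fintype.sum_prod_type]
    refine Finset.sum_congr rfl fun x _ => ?_
    have : ∑ f : A → Y, ∏ a, ρ a x (f a) = 1 := by
      have hpiu : (Fintype.piFinset fun _ : A => (Finset.univ : Finset Y)) = Finset.univ :=
        Fintype.piFinset_univ
      rw [← hpiu, ← Finset.prod_univ_sum (fun _ => (Finset.univ : Finset Y)) (fun a y => ρ a x y)]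
      rw [Finset.prod_congr rfl fun a _ => hρ1 a x]
      simp
    show ∑ f : A → Y, c x * ∏ a, ρ a x (f a) = c x
    rw [← Finset.mul_sum, this, mul_one]
  · intro a x y
    rw [Fintype.sum_prod_type]
    have hsplit : ∀ (x₀ : X) (f : A → Y),
        (if x = x₀ ∧ y = f a then (1:ℝ) else 0)
          = (if x₀ = x then (1:ℝ) else 0) * (if f a = y then 1 else 0) := by
      intro x₀ f
      by_cases h1 : x = x₀ <;> by_cases h2 : y = f a <;>
        simp [h1, h2, eq_comm]
    calc ∑ x₀ : X, ∑ f : A → Y, (c x₀ * ∏ a', ρ a' x₀ (f a')) *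
          (if x = x₀ ∧ y = f a then (1:ℝ) else 0)
        = ∑ x₀ : X, (if x₀ = x then (1:ℝ) else 0) *
            ∑ f : A → Y, c x₀ * ((if f a = y then (1:ℝ) else 0) * ∏ a', ρ a' x₀ (f a')) := by
          refine Finset.sum_congr rfl fun x₀ _ => ?_
          rw [Finset.mul_sum]
          refine Finset.sum_congr rfl fun f _ => ?_
          rw [hsplit x₀ f]; ring
      _ = ∑ f : A → Y, c x * ((if f a = y then (1:ℝ) else 0) * ∏ a', ρ a' x (f a')) := by
          simp only [ite_mul, one_mul, zero_mul]
          rw [Finset.sum_ite_eq' Finset.univ x]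
          simp
      _ = c x * ρ a x y := by
          rw [← Finset.mul_sum, sum_pi_pin (fun a' y' => ρ a' x y') (fun a' => hρ1 a' x) a y]
      _ = F a x y := (hFρ a x y).symm

end Aux

section

variable {A B X Y : Type*} [Fintype A] [Fintype B] [Fintype X] [Fintype Y]

/-- A bipartite no-signalling state: nonnegative, normalized, no-signalling. -/
def IsNSState (P : A → B → X → Y → ℝ) : Prop :=
  (∀ a b x y, 0 ≤ P a b x y) ∧
  (∀ x y, ∑ a, ∑ b, P a b x y = 1) ∧
  (∀ a x y y', ∑ b, P a b x y = ∑ b, P a b x y') ∧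
  (∀ b x x' y, ∑ a, P a b x y = ∑ a, P a b x' y)

/-- The total measurement array of a bipartite basic measurement: either
measure `x*` on the first system and then `y_a` on the second (depending on
the first outcome `a`), or vice versa. -/
def IsBasicTotalArray [DecidableEq X] [DecidableEq Y]
    (N : A → B → X → Y → ℝ) : Prop :=
  (∃ (x₀ : X) (ya : A → Y), ∀ a b x y,
      N a b x y = if x = x₀ ∧ y = ya a then 1 else 0) ∨
  (∃ (y₀ : Y) (xb : B → X), ∀ a b x y,
      N a b x y = if y = y₀ ∧ x = xb b then 1 else 0)

/-- Every total measurement array for a bipartite box-world system is a convex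
combination of total measurement arrays of basic measurements. -/
theorem bipartite_total_array_is_convex_combination_of_basic
    [DecidableEq X] [DecidableEq Y]
    [Nonempty A] [Nonempty B] [Nonempty X] [Nonempty Y]
    (M : A → B → X → Y → ℝ)
    (hMpos : ∀ a b x y, 0 ≤ M a b x y)
    (hM : ∀ P : A → B → X → Y → ℝ, IsNSState P →
      ∑ x, ∑ y, ∑ a, ∑ b, M a b x y * P a b x y = 1) :
    ∃ (n : ℕ) (q : Fin n → ℝ) (N : Fin n → (A → B → X → Y → ℝ)),
      (∀ i, 0 ≤ q i) ∧ (∑ i, q i = 1) ∧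
      (∀ i, IsBasicTotalArray (N i)) ∧
      (∀ a b x y, M a b x y = ∑ i, q i * N i a b x y) := by
  classical
  have hcardA : (0:ℝ) < (Fintype.card A : ℝ) := by
    exact_mod_cast Fintype.card_pos
  set a₀ : A := Classical.arbitrary A
  set b₀ : B := Classical.arbitrary B
  -- Deterministic product states give the basic constraint.
  have hdet : ∀ (f : X → A) (g : Y → B), ∑ x, ∑ y, M (f x) (g y) x y = 1 := by
    intro f g
    have hP : IsNSState (fun a b x y =>
        (if a = f x then (1:ℝ) else 0) * (if b = g y then 1 else 0)) := by
      refine ⟨fun a b x y => ?_, fun x y => ?_, fun a x y y' => ?_, fun b x x' y => ?_⟩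
      · positivity
      · simp [← Finset.sum_mul, Finset.sum_ite_eq', Finset.mul_sum]
      · simp [← Finset.mul_sum, Finset.sum_ite_eq']
      · simp [← Finset.sum_mul, Finset.sum_ite_eq']
    have h := hM _ hP
    have hxy : ∀ x y, (∑ a, ∑ b, M a b x y *
        ((if a = f x then (1:ℝ) else 0) * (if b = g y then 1 else 0)))
          = M (f x) (g y) x y := by
      intro x y
      simp [mul_ite, mul_one, mul_zero, Finset.sum_ite_eq']
    calc ∑ x, ∑ y, M (f x) (g y) x y
        = ∑ x, ∑ y, ∑ a, ∑ b, M a b x y *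
            ((if a = f x then (1:ℝ) else 0) * (if b = g y then 1 else 0)) := by
          exact Finset.sum_congr rfl fun x _ => Finset.sum_congr rfl fun y _ => (hxy x y).symm
      _ = 1 := h
  -- Step 1: changing the A-input at one point does not change totals.
  have step1 : ∀ (a a' : A) (x₀ : X) (g : Y → B),
      ∑ y, M a (g y) x₀ y = ∑ y, M a' (g y) x₀ y := by
    intro a a' x₀ g
    have h1 := hdet (Function.update (fun _ => a') x₀ a) g
    have h2 := hdet (fun _ => a') g
    have := single_of_sum_eq (F := fun x => ∑ y, M (Function.update (fun _ => a') x₀ a x) (g y) x y)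
      (G := fun x => ∑ y, M a' (g y) x y) x₀ (h1.trans h2.symm)
      (fun j hj => by simp [Function.update_of_ne hj])
    simpa [Function.update_self] using this
  -- Step 2: differences in the A-outcome are independent of the B-outcome.
  have step2 : ∀ (a a' : A) (x : X) (b b' : B) (y₀ : Y),
      M a b x y₀ - M a' b x y₀ = M a b' x y₀ - M a' b' x y₀ := by
    intro a a' x b b' y₀
    have h1 := step1 a a' x (Function.update (fun _ => b') y₀ b)
    have h2 := step1 a a' x (fun _ => b')
    have := single_of_sum_eq
      (F := fun y => M a (Function.update (fun _ => b') y₀ b y) x y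
        - M a' (Function.update (fun _ => b') y₀ b y) x y)
      (G := fun y => M a b' x y - M a' b' x y) y₀
      (by rw [Finset.sum_sub_distrib, Finset.sum_sub_distrib, h1, h2]; ring)
      (fun j hj => by simp [Function.update_of_ne hj])
    simpa [Function.update_self] using this
  -- Step 2b: row sums over y with fixed b₀ are independent of a.
  have step2b : ∀ (a a' : A) (x : X), ∑ y, M a b₀ x y = ∑ y, M a' b₀ x y :=
    fun a a' x => step1 a a' x (fun _ => b₀)
  -- Step 3: column sums over x are independent of b (for fixed a).
  have step3 : ∀ (b b' : B) (y₀ : Y) (a : A),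
      ∑ x, M a b x y₀ = ∑ x, M a b' x y₀ := by
    intro b b' y₀ a
    have h1 := hdet (fun _ => a) (Function.update (fun _ => b') y₀ b)
    have h2 := hdet (fun _ => a) (fun _ => b')
    rw [Finset.sum_comm] at h1 h2
    have := single_of_sum_eq
      (F := fun y => ∑ x, M a (Function.update (fun _ => b') y₀ b y) x y)
      (G := fun y => ∑ x, M a b' x y) y₀ (h1.trans h2.symm)
      (fun j hj => by simp [Function.update_of_ne hj])
    simpa [Function.update_self] using this
  -- Step 4: total sums are 1.
  have step4 : ∀ (a : A) (b : B), ∑ x, ∑ y, M a b x y = 1 :=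
    fun a b => hdet (fun _ => a) (fun _ => b)
  -- The additive split M = F0 + G0.
  set G0 : B → X → Y → ℝ := fun b x y => (∑ a, M a b x y) / (Fintype.card A : ℝ) with hG0
  set F0 : A → X → Y → ℝ := fun a x y => M a b₀ x y - G0 b₀ x y with hF0
  have hsplit0 : ∀ a b x y, M a b x y = F0 a x y + G0 b x y := by
    intro a b x y
    have hconst : ∀ a' : A, M a' b x y - M a' b₀ x y = M a b x y - M a b₀ x y :=
      fun a' => by have := step2 a' a x b b₀ y; linarith
    have hsum : ∑ a', (M a' b x y - M a' b₀ x y)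
        = (Fintype.card A : ℝ) * (M a b x y - M a b₀ x y) := by
      calc ∑ a', (M a' b x y - M a' b₀ x y)
          = ∑ _a' : A, (M a b x y - M a b₀ x y) :=
            Finset.sum_congr rfl fun a' _ => hconst a'
        _ = (Fintype.card A : ℝ) * (M a b x y - M a b₀ x y) := by
            rw [Finset.sum_const, Finset.card_univ, nsmul_eq_mul]
    have hG : G0 b x y - G0 b₀ x y = M a b x y - M a b₀ x y := by
      rw [hG0]
      simp only
      rw [div_sub_div_same, ← Finset.sum_sub_distrib, hsum,
        mul_div_cancel_left₀ _ (ne_of_gt hcardA)]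
    rw [hF0]
    simp only
    linarith
  -- Shift to make both parts nonnegative.
  set t : X → Y → ℝ := fun x y => Finset.univ.inf' Finset.univ_nonempty (fun a => F0 a x y)
    with ht
  set F : A → X → Y → ℝ := fun a x y => F0 a x y - t x y with hF
  set G : B → X → Y → ℝ := fun b x y => G0 b x y + t x y with hG
  have hsplit : ∀ a b x y, M a b x y = F a x y + G b x y := by
    intro a b x y
    rw [hF, hG]; simp only
    have := hsplit0 a b x y; linarith
  have hFpos : ∀ a x y, 0 ≤ F a x y := by
    intro a x y
    rw [hF]; simp only
    have : t x y ≤ F0 a x y := Finset.inf'_le _ (Finset.mem_univ a)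
    linarith
  have hGpos : ∀ b x y, 0 ≤ G b x y := by
    intro b x y
    obtain ⟨a, -, ha⟩ := Finset.exists_mem_eq_inf' (Finset.univ_nonempty (α := A))
      (fun a => F0 a x y)
    have h1 : G b x y = M a b x y - F a x y := by
      have := hsplit a b x y; linarith
    have h2 : F a x y = 0 := by
      rw [hF]; simp only
      rw [ht]; simp only
      rw [ha]; ring
    rw [h1, h2, sub_zero]; exact hMpos a b x y
  -- Row-sum constancy for F, column-sum constancy for G.
  have hFrow : ∀ (a a' : A) (x : X), ∑ y, F a x y = ∑ y, F a' x y := by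
    intro a a' x
    have h1 : ∀ a : A, ∑ y, F a x y = ∑ y, M a b₀ x y - ∑ y, G b₀ x y := by
      intro a
      rw [← Finset.sum_sub_distrib]
      exact Finset.sum_congr rfl fun y _ => by have := hsplit a b₀ x y; linarith
    rw [h1 a, h1 a', step2b a a' x]
  have hGcol : ∀ (b b' : B) (y : Y), ∑ x, G b x y = ∑ x, G b' x y := by
    intro b b' y
    have h1 : ∀ b : B, ∑ x, G b x y = ∑ x, M a₀ b x y - ∑ x, F a₀ x y := by
      intro b
      rw [← Finset.sum_sub_distrib]
      exact Finset.sum_congr rfl fun x _ => by have := hsplit a₀ b x y; linarith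
    rw [h1 b, h1 b', step3 b b' y a₀]
  -- Totals.
  set cA : X → ℝ := fun x => ∑ y, F a₀ x y with hcA
  set cB : Y → ℝ := fun y => ∑ x, G b₀ x y with hcB
  have htotal : ∑ x, cA x + ∑ y, cB y = 1 := by
    have h := step4 a₀ b₀
    calc ∑ x, cA x + ∑ y, cB y
        = ∑ x, ∑ y, F a₀ x y + ∑ y, ∑ x, G b₀ x y := rfl
      _ = ∑ x, ∑ y, F a₀ x y + ∑ x, ∑ y, G b₀ x y := by rw [Finset.sum_comm (f := fun x y => G b₀ x y)]
      _ = ∑ x, ∑ y, (F a₀ x y + G b₀ x y) := by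
          rw [← Finset.sum_add_distrib]
          exact Finset.sum_congr rfl fun x _ => (Finset.sum_add_distrib).symm
      _ = ∑ x, ∑ y, M a₀ b₀ x y :=
          Finset.sum_congr rfl fun x _ => Finset.sum_congr rfl fun y _ => (hsplit a₀ b₀ x y).symm
      _ = 1 := h
  -- Apply the one-sided decomposition to each part.
  obtain ⟨q1, hq1pos, hq1sum, hq1rep⟩ := decomp_side F cA hFpos
    (fun a x => hFrow a a₀ x)
  obtain ⟨q2, hq2pos, hq2sum, hq2rep⟩ := decomp_side (A := B) (X := Y) (Y := X)
    (fun b y x => G b x y) cB (fun b y x => hGpos b x y)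
    (fun b y => hGcol b b₀ y)
  -- Assemble the final convex combination.
  set ι := (X × (A → Y)) ⊕ (Y × (B → X)) with hι
  set e : Fin (Fintype.card ι) ≃ ι := (Fintype.equivFin ι).symm with he
  refine ⟨Fintype.card ι, fun i => Sum.elim q1 q2 (e i),
    fun i => Sum.elim
      (fun p => fun a b x y => if x = p.1 ∧ y = p.2 a then (1:ℝ) else 0)
      (fun p => fun a b x y => if y = p.1 ∧ x = p.2 b then (1:ℝ) else 0) (e i),
    fun i => ?_, ?_, fun i => ?_, fun a b x y => ?_⟩
  · cases h : e i with
    | inl p => simp only [h, Sum.elim_inl]; exact hq1pos p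
    | inr p => simp only [h, Sum.elim_inr]; exact hq2pos p
  · rw [Equiv.sum_comp e (Sum.elim q1 q2), Fintype.sum_sum_type]
    simp only [Sum.elim_inl, Sum.elim_inr]
    rw [hq1sum, hq2sum]
    exact htotal
  · cases h : e i with
    | inl p =>
        simp only [h, Sum.elim_inl]
        exact Or.inl ⟨p.1, p.2, fun a b x y => rfl⟩
    | inr p =>
        simp only [h, Sum.elim_inr]
        exact Or.inr ⟨p.1, p.2, fun a b x y => rfl⟩
  · rw [Equiv.sum_comp e (fun j => Sum.elim q1 q2 j * Sum.elim
      (fun p => fun a b x y => if x = p.1 ∧ y = p.2 a then (1:ℝ) else 0)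
      (fun p => fun a b x y => if y = p.1 ∧ x = p.2 b then (1:ℝ) else 0) j a b x y),
      Fintype.sum_sum_type]
    simp only [Sum.elim_inl, Sum.elim_inr]
    rw [hq1rep a x y, hq2rep b y x]
    exact hsplit a b x y


end
end

section
/- The tripartite family of effects {R₀,...,R₇} defined by R₀(001|000) = R₁(110|000) = R₂(000|100) = R₃(100|100) = R₄(101|010) = R₅(111|010) = R₆(010|001) = R₇(011|001) = 1 (all other components zero) is a valid measurement in box world: for every tripartite no-signalling normalized nonnegative state P(abc|xyz) with binary inputs and outputs on each of three subsystems, ∑_{r=0}^{7} R_r · P = 1, and each R_r · P ≥ 0. -/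
/-- The data of the eight tripartite effects: `R_r(abc|xyz) = 1` exactly at
the listed component `((a,b,c),(x,y,z))`, and `0` elsewhere. -/
def Rdata : Fin 8 → (Fin 2 × Fin 2 × Fin 2) × (Fin 2 × Fin 2 × Fin 2) :=
  ![((0,0,1),(0,0,0)), ((1,1,0),(0,0,0)),
    ((0,0,0),(1,0,0)), ((1,0,0),(1,0,0)),
    ((1,0,1),(0,1,0)), ((1,1,1),(0,1,0)),
    ((0,1,0),(0,0,1)), ((0,1,1),(0,0,1))]

/-- The effect arrays `R_r`. -/
noncomputable def Reff (r : Fin 8) (a b c x y z : Fin 2) : ℝ :=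
  if ((a, b, c), (x, y, z)) = Rdata r then 1 else 0

theorem sum_sum_ite_eq_mul {α β γ δ ε ζ R : Type*} [Fintype α] [Fintype β] [Fintype γ]
    [Fintype δ] [Fintype ε] [Fintype ζ] [DecidableEq α] [DecidableEq β] [DecidableEq γ]
    [DecidableEq δ] [DecidableEq ε] [DecidableEq ζ] [Semiring R]
    (d : (α × β × γ) × (δ × ε × ζ)) (g : (α × β × γ) × (δ × ε × ζ) → R) :
    ∑ x, ∑ y, ∑ z, ∑ a, ∑ b, ∑ c,
      (if ((a, b, c), (x, y, z)) = d then 1 else 0) * g ((a, b, c), (x, y, z)) = g d := by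
  simp only [ite_mul, one_mul, zero_mul]
  rw [← Fintype.sum_ite_eq' d g, Fintype.sum_prod_type_right]
  simp only [Fintype.sum_prod_type]

theorem sum_Reff_mul (r : Fin 8) (P : Fin 2 → Fin 2 → Fin 2 → Fin 2 → Fin 2 → Fin 2 → ℝ) :
    ∑ x, ∑ y, ∑ z, ∑ a, ∑ b, ∑ c, Reff r a b c x y z * P a b c x y z =
      P (Rdata r).1.1 (Rdata r).1.2.1 (Rdata r).1.2.2
        (Rdata r).2.1 (Rdata r).2.2.1 (Rdata r).2.2.2 :=
  sum_sum_ite_eq_mul (Rdata r) fun p => P p.1.1 p.1.2.1 p.1.2.2 p.2.1 p.2.2.1 p.2.2.2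

/-- The family `{R₀,…,R₇}` is a valid tripartite measurement in box world:
on every tripartite no-signalling normalized nonnegative state, each outcome
probability is nonnegative and the outcome probabilities sum to 1. -/
theorem tripartite_measurement_valid
    (P : Fin 2 → Fin 2 → Fin 2 → Fin 2 → Fin 2 → Fin 2 → ℝ)
    (hpos : ∀ a b c x y z, 0 ≤ P a b c x y z)
    (hnorm : ∀ x y z, ∑ a, ∑ b, ∑ c, P a b c x y z = 1)
    (hNS1 : ∀ b c x x' y z, ∑ a, P a b c x y z = ∑ a, P a b c x' y z)
    (hNS2 : ∀ a c x y y' z, ∑ b, P a b c x y z = ∑ b, P a b c x y' z)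
    (hNS3 : ∀ a b x y z z', ∑ c, P a b c x y z = ∑ c, P a b c x y z') :
    (∀ r : Fin 8,
      0 ≤ ∑ x, ∑ y, ∑ z, ∑ a, ∑ b, ∑ c, Reff r a b c x y z * P a b c x y z) ∧
    (∑ r : Fin 8,
      ∑ x, ∑ y, ∑ z, ∑ a, ∑ b, ∑ c, Reff r a b c x y z * P a b c x y z) = 1 := by
  refine ⟨fun r => sum_Reff_mul r P ▸ hpos _ _ _ _ _ _, ?_⟩
  simp only [sum_Reff_mul, Fin.sum_univ_eight, Rdata, Matrix.cons_val]
  -- Pairing up the outcomes that differ only in one party's output, no-signalling moves each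
  -- pair to the input 000, where the eight probabilities sum to 1.
  have hA := hNS1 0 0 1 0 0 0
  have hB := hNS2 1 1 0 1 0 0
  have hC := hNS3 0 1 0 0 1 0
  have hN := hnorm 0 0 0
  simp only [Fin.sum_univ_two] at hA hB hC hN
  linarith
end

section
/- The total measurement array M = ∑_{r=0}^{7} R_r of the tripartite measurement (with nonzero components M(001|000) = M(110|000) = M(000|100) = M(100|100) = M(101|010) = M(111|010) = M(010|001) = M(011|001) = 1) cannot be written as a convex combination (with positive weights) of total measurement arrays of basic tripartite measurements. In particular, any nonnegative array N ≤ M (componentwise) that is the total measurement array of a basic measurement scaled by a positive constant must be zero. -/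
/-- The total measurement array `M = ∑_r R_r` of the tripartite measurement:
`M(abc|xyz) = 1` at the eight listed components and `0` elsewhere. -/
noncomputable def Mtot (a b c x y z : Fin 2) : ℝ :=
  ∑ r : Fin 8, if ((a, b, c), (x, y, z)) = Rdata r then (1 : ℝ) else 0

/-- Total measurement arrays of bipartite basic measurements
(binary inputs/outputs): measure one side with a fixed input, then the other
side with an input depending on the first outcome. -/
def IsBasicTotal2 (N : Fin 2 → Fin 2 → Fin 2 → Fin 2 → ℝ) : Prop :=
  (∃ (x₀ : Fin 2) (ya : Fin 2 → Fin 2), ∀ a b x y,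
      N a b x y = if x = x₀ ∧ y = ya a then 1 else 0) ∨
  (∃ (y₀ : Fin 2) (xb : Fin 2 → Fin 2), ∀ a b x y,
      N a b x y = if y = y₀ ∧ x = xb b then 1 else 0)

/-- Total measurement arrays of tripartite basic measurements: some party is
measured first with a fixed fiducial input, and conditioned on its outcome a
bipartite basic measurement is performed on the remaining two parties. -/
def IsBasicTotal3 (N : Fin 2 → Fin 2 → Fin 2 → Fin 2 → Fin 2 → Fin 2 → ℝ) : Prop :=
  (∃ (x₀ : Fin 2) (N₂ : Fin 2 → (Fin 2 → Fin 2 → Fin 2 → Fin 2 → ℝ)),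
      (∀ a, IsBasicTotal2 (N₂ a)) ∧
      ∀ a b c x y z, N a b c x y z = if x = x₀ then N₂ a b c y z else 0) ∨
  (∃ (y₀ : Fin 2) (N₂ : Fin 2 → (Fin 2 → Fin 2 → Fin 2 → Fin 2 → ℝ)),
      (∀ b, IsBasicTotal2 (N₂ b)) ∧
      ∀ a b c x y z, N a b c x y z = if y = y₀ then N₂ b a c x z else 0) ∨
  (∃ (z₀ : Fin 2) (N₂ : Fin 2 → (Fin 2 → Fin 2 → Fin 2 → Fin 2 → ℝ)),
      (∀ c, IsBasicTotal2 (N₂ c)) ∧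
      ∀ a b c x y z, N a b c x y z = if z = z₀ then N₂ c a b x y else 0)

/-- Any bipartite basic total array sums to `4` over all entries. -/
lemma sum2 (N : Fin 2 → Fin 2 → Fin 2 → Fin 2 → ℝ) (h : IsBasicTotal2 N) :
    ∑ a : Fin 2, ∑ b : Fin 2, ∑ x : Fin 2, ∑ y : Fin 2, N a b x y = 4 := by
  have two : ∀ t : Fin 2, t = 0 ∨ t = 1 := by decide
  rcases h with ⟨x₀, ya, hf⟩ | ⟨y₀, xb, hf⟩
  · simp only [hf, Fin.sum_univ_two]
    rcases two x₀ with h0 | h0 <;> rcases two (ya 0) with h1 | h1 <;>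
      rcases two (ya 1) with h2 | h2 <;>
      simp [h0, h1, h2] <;> norm_num
  · simp only [hf, Fin.sum_univ_two]
    rcases two y₀ with h0 | h0 <;> rcases two (xb 0) with h1 | h1 <;>
      rcases two (xb 1) with h2 | h2 <;>
      simp [h0, h1, h2] <;> norm_num

/-- Any tripartite basic total array sums to `8` over all entries. -/
lemma sum3 (N : Fin 2 → Fin 2 → Fin 2 → Fin 2 → Fin 2 → Fin 2 → ℝ)
    (h : IsBasicTotal3 N) :
    ∑ a : Fin 2, ∑ b : Fin 2, ∑ c : Fin 2, ∑ x : Fin 2, ∑ y : Fin 2, ∑ z : Fin 2,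
      N a b c x y z = 8 := by
  have two : ∀ t : Fin 2, t = 0 ∨ t = 1 := by decide
  rcases h with ⟨p, N₂, h2, hf⟩ | ⟨p, N₂, h2, hf⟩ | ⟨p, N₂, h2, hf⟩ <;>
  · have k0 := sum2 _ (h2 0)
    have k1 := sum2 _ (h2 1)
    simp only [Fin.sum_univ_two] at k0 k1
    simp only [hf]
    rcases two p with h0 | h0 <;> subst h0 <;>
      simp [Fin.sum_univ_two] <;> linarith [k0, k1]

/-- Bipartite basic total arrays are `{0,1}`-valued. -/
lemma vals2 (N : Fin 2 → Fin 2 → Fin 2 → Fin 2 → ℝ) (h : IsBasicTotal2 N) :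
    ∀ a b x y, N a b x y = 0 ∨ N a b x y = 1 := by
  rcases h with ⟨x₀, ya, hf⟩ | ⟨y₀, xb, hf⟩ <;> intro a b x y <;> rw [hf] <;>
    split_ifs <;> simp

/-- Tripartite basic total arrays are `{0,1}`-valued. -/
lemma vals3 (N : Fin 2 → Fin 2 → Fin 2 → Fin 2 → Fin 2 → Fin 2 → ℝ)
    (h : IsBasicTotal3 N) :
    ∀ a b c x y z, N a b c x y z = 0 ∨ N a b c x y z = 1 := by
  rcases h with ⟨p, N₂, h2, hf⟩ | ⟨p, N₂, h2, hf⟩ | ⟨p, N₂, h2, hf⟩ <;>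
    intro a b c x y z <;> rw [hf] <;> split_ifs <;>
    first
      | exact vals2 _ (h2 _) _ _ _ _
      | simp

/-- A basic total array is insensitive to the outcome of the party measured
last: any `1`-entry has a neighbouring `1`-entry obtained by flipping one of
the outcomes. -/
lemma flip3 (N : Fin 2 → Fin 2 → Fin 2 → Fin 2 → Fin 2 → Fin 2 → ℝ)
    (h : IsBasicTotal3 N) (a b c x y z : Fin 2) (h1 : N a b c x y z = 1) :
    N (a + 1) b c x y z = 1 ∨ N a (b + 1) c x y z = 1 ∨ N a b (c + 1) x y z = 1 := by
  rcases h with ⟨p, N₂, h2, hf⟩ | ⟨p, N₂, h2, hf⟩ | ⟨p, N₂, h2, hf⟩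
  · rcases h2 a with ⟨X₀, F, hg⟩ | ⟨Y₀, G, hg⟩
    · right; right; rw [hf, hg] at h1 ⊢; exact h1
    · right; left; rw [hf, hg] at h1 ⊢; exact h1
  · rcases h2 b with ⟨X₀, F, hg⟩ | ⟨Y₀, G, hg⟩
    · right; right; rw [hf, hg] at h1 ⊢; exact h1
    · left; rw [hf, hg] at h1 ⊢; exact h1
  · rcases h2 c with ⟨X₀, F, hg⟩ | ⟨Y₀, G, hg⟩
    · right; left; rw [hf, hg] at h1 ⊢; exact h1
    · left; rw [hf, hg] at h1 ⊢; exact h1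

lemma Mtot_nonneg (a b c x y z : Fin 2) : 0 ≤ Mtot a b c x y z := by
  rw [Mtot]
  exact Finset.sum_nonneg fun r _ => by split_ifs <;> norm_num

lemma Mtot_pos_le (a b c x y z : Fin 2) (h : 0 < Mtot a b c x y z) :
    1 ≤ Mtot a b c x y z := by
  rw [Mtot] at h ⊢
  obtain ⟨r, -, hr⟩ := Finset.exists_ne_zero_of_sum_ne_zero h.ne'
  have h1 : (if ((a,b,c),(x,y,z)) = Rdata r then (1:ℝ) else 0) = 1 := by
    split_ifs at hr ⊢ with hc
    · rfl
    · exact absurd rfl hr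
  calc (1:ℝ) = _ := h1.symm
    _ ≤ _ := Finset.single_le_sum
        (f := fun r => if ((a,b,c),(x,y,z)) = Rdata r then (1:ℝ) else 0)
        (fun i _ => by by_cases hc : ((a,b,c),(x,y,z)) = Rdata i <;> simp [hc])
        (Finset.mem_univ r)

lemma ind_sum (r : Fin 8) :
    ∑ a : Fin 2, ∑ b : Fin 2, ∑ c : Fin 2, ∑ x : Fin 2, ∑ y : Fin 2, ∑ z : Fin 2,
      (if ((a,b,c),(x,y,z)) = Rdata r then (1:ℝ) else 0) = 1 := by
  fin_cases r <;>
    simp (config := { decide := true }) only [Rdata, Fin.sum_univ_two,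
      Matrix.cons_val_zero, Matrix.cons_val_one, Matrix.head_cons, Fin.isValue,
      Matrix.cons_val', Matrix.empty_val', Matrix.cons_val_fin_one] <;>
    norm_num

lemma Mtot_sum :
    ∑ a : Fin 2, ∑ b : Fin 2, ∑ c : Fin 2, ∑ x : Fin 2, ∑ y : Fin 2, ∑ z : Fin 2,
      Mtot a b c x y z = 8 := by
  simp only [Mtot]
  have s1 : ∀ (g : Fin 2 → Fin 8 → ℝ),
      ∑ t : Fin 2, ∑ r : Fin 8, g t r = ∑ r : Fin 8, ∑ t : Fin 2, g t r :=
    fun g => Finset.sum_comm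
  simp only [s1, ind_sum]
  norm_num

/-- Key step: no positive multiple of a basic total array fits below `M`. -/
lemma key_lemma (k : ℝ) (hk : 0 < k)
    (N : Fin 2 → Fin 2 → Fin 2 → Fin 2 → Fin 2 → Fin 2 → ℝ)
    (hN : IsBasicTotal3 N)
    (hle : ∀ a b c x y z, k * N a b c x y z ≤ Mtot a b c x y z) : False := by
  have hv := vals3 N hN
  -- `N ≤ M` pointwise
  have hle1 : ∀ a b c x y z, N a b c x y z ≤ Mtot a b c x y z := by
    intro a b c x y z
    rcases hv a b c x y z with h | h
    · rw [h]; exact Mtot_nonneg a b c x y z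
    · rw [h]
      have h2 := hle a b c x y z
      rw [h, mul_one] at h2
      exact Mtot_pos_le a b c x y z (lt_of_lt_of_le hk h2)
  -- total sums agree, hence `N = M` pointwise
  have hzero : ∑ e : (Fin 2 × Fin 2 × Fin 2) × (Fin 2 × Fin 2 × Fin 2),
      (Mtot e.1.1 e.1.2.1 e.1.2.2 e.2.1 e.2.2.1 e.2.2.2
        - N e.1.1 e.1.2.1 e.1.2.2 e.2.1 e.2.2.1 e.2.2.2) = 0 := by
    rw [Finset.sum_sub_distrib]
    have hM8 : ∑ e : (Fin 2 × Fin 2 × Fin 2) × (Fin 2 × Fin 2 × Fin 2),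
        Mtot e.1.1 e.1.2.1 e.1.2.2 e.2.1 e.2.2.1 e.2.2.2 = 8 := by
      simp only [Fintype.sum_prod_type]
      exact Mtot_sum
    have hN8 : ∑ e : (Fin 2 × Fin 2 × Fin 2) × (Fin 2 × Fin 2 × Fin 2),
        N e.1.1 e.1.2.1 e.1.2.2 e.2.1 e.2.2.1 e.2.2.2 = 8 := by
      simp only [Fintype.sum_prod_type]
      exact sum3 N hN
    rw [hM8, hN8, sub_self]
  have hall := (Finset.sum_eq_zero_iff_of_nonneg
      (fun e _ => by
        have := hle1 e.1.1 e.1.2.1 e.1.2.2 e.2.1 e.2.2.1 e.2.2.2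
        linarith)).mp hzero
  have hEq : ∀ a b c x y z, Mtot a b c x y z = N a b c x y z := by
    intro a b c x y z
    have h3 := hall ((a,b,c),(x,y,z)) (Finset.mem_univ _)
    simp only at h3
    linarith
  -- the isolated entry `(001|000)`
  have hM1 : Mtot 0 0 1 0 0 0 = 1 := by
    norm_num [Mtot, Rdata, Fin.sum_univ_succ]; decide
  have hN1 : N 0 0 1 0 0 0 = 1 := by rw [← hEq]; exact hM1
  have e01 : (0 : Fin 2) + 1 = 1 := by decide
  have e10 : (1 : Fin 2) + 1 = 0 := by decide
  rcases flip3 N hN 0 0 1 0 0 0 hN1 with h | h | h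
  · rw [e01] at h
    have := hEq 1 0 1 0 0 0
    rw [h] at this
    have hz : Mtot 1 0 1 0 0 0 = 0 := by
      norm_num [Mtot, Rdata, Fin.sum_univ_succ]; decide
    rw [hz] at this; norm_num at this
  · rw [e01] at h
    have := hEq 0 1 1 0 0 0
    rw [h] at this
    have hz : Mtot 0 1 1 0 0 0 = 0 := by
      norm_num [Mtot, Rdata, Fin.sum_univ_succ]; decide
    rw [hz] at this; norm_num at this
  · rw [e10] at h
    have := hEq 0 0 0 0 0 0
    rw [h] at this
    have hz : Mtot 0 0 0 0 0 0 = 0 := by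
      norm_num [Mtot, Rdata, Fin.sum_univ_succ]; decide
    rw [hz] at this; norm_num at this

/-- The tripartite total measurement array `M` is not a convex combination
(with positive weights) of total arrays of basic measurements; in particular,
no positive multiple of a basic total array fits below `M` componentwise. -/
theorem tripartite_measurement_not_basic :
    (¬ ∃ (n : ℕ) (q : Fin n → ℝ)
        (N : Fin n → (Fin 2 → Fin 2 → Fin 2 → Fin 2 → Fin 2 → Fin 2 → ℝ)),
      (∀ i, 0 < q i) ∧ (∑ i, q i = 1) ∧ (∀ i, IsBasicTotal3 (N i)) ∧
      (∀ a b c x y z, Mtot a b c x y z = ∑ i, q i * N i a b c x y z)) ∧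
    (∀ (k : ℝ), 0 < k →
      ∀ N : Fin 2 → Fin 2 → Fin 2 → Fin 2 → Fin 2 → Fin 2 → ℝ,
        IsBasicTotal3 N →
        ¬ (∀ a b c x y z, k * N a b c x y z ≤ Mtot a b c x y z)) := by
  constructor
  · rintro ⟨n, q, N, hq, hsum, hbasic, hM⟩
    have hn : n ≠ 0 := by
      rintro rfl
      simp at hsum
    have i0 : Fin n := ⟨0, Nat.pos_of_ne_zero hn⟩
    apply key_lemma (q i0) (hq i0) (N i0) (hbasic i0)
    intro a b c x y z
    rw [hM a b c x y z]
    refine Finset.single_le_sum (f := fun i => q i * N i a b c x y z)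
      (fun i _ => ?_) (Finset.mem_univ i0)
    have hnn : 0 ≤ N i a b c x y z := by
      rcases vals3 _ (hbasic i) a b c x y z with h | h <;> rw [h] <;> norm_num
    exact mul_nonneg (le_of_lt (hq i)) hnn
  · intro k hk N hN hle
    exact key_lemma k hk N hN hle
end

section
/- No entanglement swapping in box world: let P(a,b₁|x,y₁) and Q(b₂,c|y₂,z) be no-signalling states (Alice–Bob₁ and Bob₂–Charlie respectively), and let R be a nonnegative array R(b₁,b₂|y₁,y₂) (an effect for Bob's joint measurement outcome). Define the joint probability Pr(a,c|x,z) = ∑_{b₁,y₁,b₂,y₂} R(b₁b₂|y₁y₂) P(a,b₁|x,y₁) Q(b₂,c|y₂,z), and assume it is not identically zero. Then the normalized conditional state P_r(a,c|x,z) = Pr(a,c|x,z) / ∑_{a,c} Pr(a,c|x,z) is separable: it is a convex combination of products of collapsed states P_{b₁y₁}(a|x) = P(a,b₁|x,y₁)/∑_a P(a,b₁|x,y₁) and Q_{b₂y₂}(c|z) = Q(b₂,c|y₂,z)/∑_c Q(b₂,c|y₂,z). -/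
/-!
Write `p(b₁|y₁)` for Bob₁'s marginal of `P` and `q(b₂|y₂)` for Bob₂'s marginal of `Q`; by
no-signalling they do not depend on `x` and `z`, so the collapsed states `P_{b₁y₁} = P / p` and
`Q_{b₂y₂} = Q / q` are valid states. Every summand of `swapProb` factorises as

  `R(b₁b₂|y₁y₂) P(a,b₁|x,y₁) Q(b₂,c|y₂,z)`
    `= R(b₁b₂|y₁y₂) p(b₁|y₁) q(b₂|y₂) · P_{b₁y₁}(a|x) Q_{b₂y₂}(c|z)`,

so `swapProb` is a combination of product states with the weights `R p q`, which are nonnegative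
because `R` is. Normalising turns the weights into a probability distribution.
-/

section

variable {A X B₁ Y₁ B₂ Y₂ C Z : Type*}
  [Fintype A] [Fintype X] [Fintype B₁] [Fintype Y₁]
  [Fintype B₂] [Fintype Y₂] [Fintype C] [Fintype Z]

noncomputable def swapProb (R : B₁ → B₂ → Y₁ → Y₂ → ℝ)
    (P : A → B₁ → X → Y₁ → ℝ) (Q : B₂ → C → Y₂ → Z → ℝ)
    (a : A) (c : C) (x : X) (z : Z) : ℝ :=
  ∑ b₁, ∑ y₁, ∑ b₂, ∑ y₂, R b₁ b₂ y₁ y₂ * P a b₁ x y₁ * Q b₂ c y₂ z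

namespace BoxWorld

open Finset

section SingleSystem

variable {O I : Type*} [Fintype O]

def IsState (S : O → I → ℝ) : Prop :=
  (∀ o i, 0 ≤ S o i) ∧ ∀ i, ∑ o, S o i = 1

/-- The state obtained from `f` by conditioning on an event of probability `m`. It is taken to
be uniform when `m = 0`; the choice is irrelevant, since then `f = 0`. -/
noncomputable def collapse (f : O → I → ℝ) (m : ℝ) (o : O) (i : I) : ℝ :=
  if m = 0 then (Fintype.card O : ℝ)⁻¹ else f o i / m

variable {f : O → I → ℝ} {m : ℝ}

theorem isState_collapse [Nonempty O] (hf : ∀ o i, 0 ≤ f o i) (hm : ∀ i, ∑ o, f o i = m) :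
    IsState (collapse f m) := by
  unfold collapse
  split_ifs with h
  · refine ⟨fun _ _ => by positivity, fun _ => ?_⟩
    simp [Finset.card_univ]
  · refine ⟨fun o i => div_nonneg (hf o i) ?_, fun i => by rw [← sum_div, hm, div_self h]⟩
    rw [← hm i]
    exact sum_nonneg fun o _ => hf o i

theorem mul_collapse (hf : ∀ o i, 0 ≤ f o i) (hm : ∀ i, ∑ o, f o i = m) (o : O) (i : I) :
    m * collapse f m o i = f o i := by
  unfold collapse
  split_ifs with h
  · rw [h, zero_mul, eq_comm]
    exact (sum_eq_zero_iff_of_nonneg fun o _ => hf o i).1 ((hm i).trans h) o (mem_univ o)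
  · exact mul_div_cancel₀ _ h

end SingleSystem

section Bipartite

variable {O₁ I₁ O₂ I₂ : Type*} [Fintype O₁] [Fintype O₂]

def IsSeparable (S : O₁ → O₂ → I₁ → I₂ → ℝ) : Prop :=
  ∃ (n : ℕ) (lam : Fin n → ℝ) (S₁ : Fin n → O₁ → I₁ → ℝ) (S₂ : Fin n → O₂ → I₂ → ℝ),
    (∀ k, 0 ≤ lam k) ∧ (∑ k, lam k = 1) ∧
    (∀ k o i, 0 ≤ S₁ k o i) ∧ (∀ k i, ∑ o, S₁ k o i = 1) ∧
    (∀ k o i, 0 ≤ S₂ k o i) ∧ (∀ k i, ∑ o, S₂ k o i = 1) ∧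
    (∀ o₁ o₂ i₁ i₂, S o₁ o₂ i₁ i₂ = ∑ k, lam k * (S₁ k o₁ i₁ * S₂ k o₂ i₂))

noncomputable def normalize (S : O₁ → O₂ → I₁ → I₂ → ℝ) (o₁ : O₁) (o₂ : O₂) (i₁ : I₁) (i₂ : I₂) :
    ℝ :=
  S o₁ o₂ i₁ i₂ / ∑ o₁', ∑ o₂', S o₁' o₂' i₁ i₂

variable {ι : Type*} [Fintype ι] {S : O₁ → O₂ → I₁ → I₂ → ℝ}
  {S₁ : ι → O₁ → I₁ → ℝ} {S₂ : ι → O₂ → I₂ → ℝ}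

theorem isSeparable_of_fintype (lam : ι → ℝ) (hlam : ∀ k, 0 ≤ lam k) (hsum : ∑ k, lam k = 1)
    (hS₁ : ∀ k, IsState (S₁ k)) (hS₂ : ∀ k, IsState (S₂ k))
    (hS : ∀ o₁ o₂ i₁ i₂, S o₁ o₂ i₁ i₂ = ∑ k, lam k * (S₁ k o₁ i₁ * S₂ k o₂ i₂)) :
    IsSeparable S := by
  let e := (Fintype.equivFin ι).symm
  refine ⟨Fintype.card ι, lam ∘ e, S₁ ∘ e, S₂ ∘ e, fun k => hlam (e k),
    (e.sum_comp lam).trans hsum, fun k => (hS₁ (e k)).1, fun k => (hS₁ (e k)).2,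
    fun k => (hS₂ (e k)).1, fun k => (hS₂ (e k)).2, fun o₁ o₂ i₁ i₂ => ?_⟩
  rw [hS]
  exact (e.sum_comp fun k => lam k * (S₁ k o₁ i₁ * S₂ k o₂ i₂)).symm

theorem sum_sum_eq_sum_of_eq_sum_mul (hS₁ : ∀ k, IsState (S₁ k)) (hS₂ : ∀ k, IsState (S₂ k))
    {w : ι → ℝ} (hS : ∀ o₁ o₂ i₁ i₂, S o₁ o₂ i₁ i₂ = ∑ k, w k * (S₁ k o₁ i₁ * S₂ k o₂ i₂))
    (i₁ : I₁) (i₂ : I₂) :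
    ∑ o₁, ∑ o₂, S o₁ o₂ i₁ i₂ = ∑ k, w k := by
  calc ∑ o₁, ∑ o₂, S o₁ o₂ i₁ i₂
        = ∑ o₁, ∑ o₂, ∑ k, w k * (S₁ k o₁ i₁ * S₂ k o₂ i₂) := by simp only [hS]
    _ = ∑ k, ∑ o₁, ∑ o₂, w k * (S₁ k o₁ i₁ * S₂ k o₂ i₂) :=
      (sum_congr rfl fun _ _ => sum_comm).trans sum_comm
    _ = ∑ k, w k * ((∑ o₁, S₁ k o₁ i₁) * ∑ o₂, S₂ k o₂ i₂) := by
      refine sum_congr rfl fun k _ => ?_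
      rw [sum_mul_sum, mul_sum]
      simp only [mul_sum]
    _ = ∑ k, w k := by simp only [(hS₁ _).2, (hS₂ _).2, mul_one]

theorem isSeparable_normalize {w : ι → ℝ} (hw : ∀ k, 0 ≤ w k)
    (hS₁ : ∀ k, IsState (S₁ k)) (hS₂ : ∀ k, IsState (S₂ k))
    (hS : ∀ o₁ o₂ i₁ i₂, S o₁ o₂ i₁ i₂ = ∑ k, w k * (S₁ k o₁ i₁ * S₂ k o₂ i₂))
    (hS0 : ¬ ∀ o₁ o₂ i₁ i₂, S o₁ o₂ i₁ i₂ = 0) :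
    IsSeparable (normalize S) := by
  have hW : ∑ k, w k ≠ 0 := by
    refine fun hW => hS0 fun o₁ o₂ i₁ i₂ => ?_
    rw [hS]
    refine sum_eq_zero fun k _ => ?_
    rw [(sum_eq_zero_iff_of_nonneg fun k _ => hw k).1 hW k (mem_univ k), zero_mul]
  refine isSeparable_of_fintype (fun k => w k / ∑ j, w j)
    (fun k => div_nonneg (hw k) (sum_nonneg fun j _ => hw j))
    (by rw [← sum_div, div_self hW]) hS₁ hS₂ fun o₁ o₂ i₁ i₂ => ?_
  rw [normalize, sum_sum_eq_sum_of_eq_sum_mul hS₁ hS₂ hS, hS, sum_div]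
  exact sum_congr rfl fun k _ => (div_mul_eq_mul_div _ _ _).symm

end Bipartite

end BoxWorld

open BoxWorld Finset

theorem no_entanglement_swapping_general
    (P : A → B₁ → X → Y₁ → ℝ) (Q : B₂ → C → Y₂ → Z → ℝ)
    (R : B₁ → B₂ → Y₁ → Y₂ → ℝ)
    (hPpos : ∀ a b₁ x y₁, 0 ≤ P a b₁ x y₁)
    (hPNS2 : ∀ b₁ x x' y₁, ∑ a, P a b₁ x y₁ = ∑ a, P a b₁ x' y₁)
    (hQpos : ∀ b₂ c y₂ z, 0 ≤ Q b₂ c y₂ z)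
    (hQNS1 : ∀ b₂ y₂ z z', ∑ c, Q b₂ c y₂ z = ∑ c, Q b₂ c y₂ z')
    (hRpos : ∀ b₁ b₂ y₁ y₂, 0 ≤ R b₁ b₂ y₁ y₂)
    (hnonzero : ¬ ∀ a c x z, swapProb R P Q a c x z = 0) :
    ∃ (n : ℕ) (lam : Fin n → ℝ)
      (S₁ : Fin n → A → X → ℝ) (S₂ : Fin n → C → Z → ℝ),
      (∀ i, 0 ≤ lam i) ∧ (∑ i, lam i = 1) ∧
      (∀ i a x, 0 ≤ S₁ i a x) ∧ (∀ i x, ∑ a, S₁ i a x = 1) ∧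
      (∀ i c z, 0 ≤ S₂ i c z) ∧ (∀ i z, ∑ c, S₂ i c z = 1) ∧
      (∀ a c x z,
        swapProb R P Q a c x z / (∑ a', ∑ c', swapProb R P Q a' c' x z)
          = ∑ i, lam i * (S₁ i a x * S₂ i c z)) := by
  obtain ⟨a₀, c₀, x₀, z₀, -⟩ : ∃ a c x z, swapProb R P Q a c x z ≠ 0 := by simpa using hnonzero
  have : Nonempty A := ⟨a₀⟩
  have : Nonempty C := ⟨c₀⟩
  let p b₁ y₁ := ∑ a, P a b₁ x₀ y₁
  let q b₂ y₂ := ∑ c, Q b₂ c y₂ z₀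
  have hp b₁ y₁ x : ∑ a, P a b₁ x y₁ = p b₁ y₁ := hPNS2 b₁ x x₀ y₁
  have hq b₂ y₂ z : ∑ c, Q b₂ c y₂ z = q b₂ y₂ := hQNS1 b₂ y₂ z z₀
  have hPc b₁ y₁ := mul_collapse (fun a x => hPpos a b₁ x y₁) (hp b₁ y₁)
  have hQc b₂ y₂ := mul_collapse (fun c z => hQpos b₂ c y₂ z) (hq b₂ y₂)
  refine isSeparable_normalize
    (w := fun t : B₁ × Y₁ × B₂ × Y₂ =>
      R t.1 t.2.2.1 t.2.1 t.2.2.2 * (p t.1 t.2.1 * q t.2.2.1 t.2.2.2))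
    (fun t => mul_nonneg (hRpos _ _ _ _) (mul_nonneg (sum_nonneg fun a _ => hPpos a _ _ _)
      (sum_nonneg fun c _ => hQpos _ c _ _)))
    (fun t => isState_collapse (fun a x => hPpos a t.1 x t.2.1) (hp t.1 t.2.1))
    (fun t => isState_collapse (fun c z => hQpos t.2.2.1 c t.2.2.2 z) (hq t.2.2.1 t.2.2.2))
    (fun a c x z => ?_) hnonzero
  simp only [swapProb, Fintype.sum_prod_type]
  refine sum_congr rfl fun b₁ _ => sum_congr rfl fun y₁ _ =>
    sum_congr rfl fun b₂ _ => sum_congr rfl fun y₂ _ => ?_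
  rw [← hPc b₁ y₁ a x, ← hQc b₂ y₂ c z]
  ring

/-- No entanglement swapping in box world: whatever outcome effect `R` (a
nonnegative array) Bob's measurement produces, the resulting conditional state
of Alice and Charlie is separable: a convex combination of products of valid
single-system (collapsed) states. -/
theorem no_entanglement_swapping
    (P : A → B₁ → X → Y₁ → ℝ) (Q : B₂ → C → Y₂ → Z → ℝ)
    (R : B₁ → B₂ → Y₁ → Y₂ → ℝ)
    (hPpos : ∀ a b₁ x y₁, 0 ≤ P a b₁ x y₁)
    (hPnorm : ∀ x y₁, ∑ a, ∑ b₁, P a b₁ x y₁ = 1)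
    (hPNS1 : ∀ a x y₁ y₁', ∑ b₁, P a b₁ x y₁ = ∑ b₁, P a b₁ x y₁')
    (hPNS2 : ∀ b₁ x x' y₁, ∑ a, P a b₁ x y₁ = ∑ a, P a b₁ x' y₁)
    (hQpos : ∀ b₂ c y₂ z, 0 ≤ Q b₂ c y₂ z)
    (hQnorm : ∀ y₂ z, ∑ b₂, ∑ c, Q b₂ c y₂ z = 1)
    (hQNS1 : ∀ b₂ y₂ z z', ∑ c, Q b₂ c y₂ z = ∑ c, Q b₂ c y₂ z')
    (hQNS2 : ∀ c y₂ y₂' z, ∑ b₂, Q b₂ c y₂ z = ∑ b₂, Q b₂ c y₂' z)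
    (hRpos : ∀ b₁ b₂ y₁ y₂, 0 ≤ R b₁ b₂ y₁ y₂)
    (hnonzero : ¬ ∀ a c x z, swapProb R P Q a c x z = 0) :
    ∃ (n : ℕ) (lam : Fin n → ℝ)
      (S₁ : Fin n → A → X → ℝ) (S₂ : Fin n → C → Z → ℝ),
      (∀ i, 0 ≤ lam i) ∧ (∑ i, lam i = 1) ∧
      (∀ i a x, 0 ≤ S₁ i a x) ∧ (∀ i x, ∑ a, S₁ i a x = 1) ∧
      (∀ i c z, 0 ≤ S₂ i c z) ∧ (∀ i z, ∑ c, S₂ i c z = 1) ∧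
      (∀ a c x z,
        swapProb R P Q a c x z / (∑ a', ∑ c', swapProb R P Q a' c' x z)
          = ∑ i, lam i * (S₁ i a x * S₂ i c z)) :=
  no_entanglement_swapping_general P Q R hPpos hPNS2 hQpos hQNS1 hRpos hnonzero

end
end

section
/- Tsirelson's bound: for any quantum state ρ on a bipartite Hilbert space H_A ⊗ H_B and Hermitian observables A₀, A₁ on H_A and B₀, B₁ on H_B with operator norms ≤ 1 (eigenvalues in [−1,1]), the CHSH operator S = A₀⊗B₀ + A₀⊗B₁ + A₁⊗B₀ − A₁⊗B₁ satisfies |Tr(ρ S)| ≤ 2√2. -/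
open Kronecker ComplexOrder

/-!
With `P = A₀ + A₁ - √2 B₀` and `Q = A₀ - A₁ - √2 B₁`, commutativity of the `Aᵢ` with the `Bⱼ`
gives the sum-of-squares decomposition
`2√2 - S = (√2/4) (P² + Q²) + (√2/2) ((1 - A₀²) + (1 - A₁²) + (1 - B₀²) + (1 - B₁²))`,
so `-2√2 ≤ S ≤ 2√2` in the order of any star-ordered real algebra. On `H_A ⊗ H_B` the
observables `Aᵢ ⊗ 1` and `1 ⊗ Bⱼ` commute, and `X ↦ Tr(ρ X)` is a positive functional taking
the value `1` at `1`, so it maps this operator interval into `[-2√2, 2√2]`.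
-/

section OrderedStarAlgebra

variable {R : Type*} [Ring R]

def chsh (A₀ A₁ B₀ B₁ : R) : R := A₀ * B₀ + A₀ * B₁ + A₁ * B₀ - A₁ * B₁

variable {A₀ A₁ B₀ B₁ : R}

theorem chsh_neg_right : chsh A₀ A₁ (-B₀) (-B₁) = -chsh A₀ A₁ B₀ B₁ := by
  simp only [chsh]
  noncomm_ring

variable [Algebra ℝ R]

theorem two_sqrt_two_sub_chsh_eq_sum_of_squares
    (h₀₀ : Commute A₀ B₀) (h₀₁ : Commute A₀ B₁) (h₁₀ : Commute A₁ B₀) (h₁₁ : Commute A₁ B₁) :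
    (2 * √2) • 1 - chsh A₀ A₁ B₀ B₁ =
      (√2 / 4) • ((A₀ + A₁ - √2 • B₀) * (A₀ + A₁ - √2 • B₀)
          + (A₀ - A₁ - √2 • B₁) * (A₀ - A₁ - √2 • B₁))
        + (√2 / 2) • ((1 - A₀ * A₀) + (1 - A₁ * A₁) + (1 - B₀ * B₀) + (1 - B₁ * B₁)) := by
  simp only [chsh, add_mul, mul_add, sub_mul, mul_sub, smul_mul_assoc, mul_smul_comm,
    h₀₀.eq, h₀₁.eq, h₁₀.eq, h₁₁.eq]
  match_scalars <;> grind

variable [PartialOrder R] [StarRing R] [StarOrderedRing R] [StarModule ℝ R]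

theorem chsh_le_two_sqrt_two
    (hA₀ : IsSelfAdjoint A₀) (hA₁ : IsSelfAdjoint A₁)
    (hB₀ : IsSelfAdjoint B₀) (hB₁ : IsSelfAdjoint B₁)
    (hA₀sq : A₀ * A₀ ≤ 1) (hA₁sq : A₁ * A₁ ≤ 1) (hB₀sq : B₀ * B₀ ≤ 1) (hB₁sq : B₁ * B₁ ≤ 1)
    (h₀₀ : Commute A₀ B₀) (h₀₁ : Commute A₀ B₁) (h₁₀ : Commute A₁ B₀) (h₁₁ : Commute A₁ B₁) :
    chsh A₀ A₁ B₀ B₁ ≤ (2 * √2) • 1 := by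
  have hP : IsSelfAdjoint (A₀ + A₁ - √2 • B₀) := (hA₀.add hA₁).sub ((IsSelfAdjoint.all _).smul hB₀)
  have hQ : IsSelfAdjoint (A₀ - A₁ - √2 • B₁) := (hA₀.sub hA₁).sub ((IsSelfAdjoint.all _).smul hB₁)
  rw [← sub_nonneg, two_sqrt_two_sub_chsh_eq_sum_of_squares h₀₀ h₀₁ h₁₀ h₁₁]
  rw [← sub_nonneg] at hA₀sq hA₁sq hB₀sq hB₁sq
  exact add_nonneg
    (smul_nonneg (by positivity) (add_nonneg hP.mul_self_nonneg hQ.mul_self_nonneg))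
    (smul_nonneg (by positivity) (add_nonneg (add_nonneg (add_nonneg hA₀sq hA₁sq) hB₀sq) hB₁sq))

theorem chsh_mem_Icc
    (hA₀ : IsSelfAdjoint A₀) (hA₁ : IsSelfAdjoint A₁)
    (hB₀ : IsSelfAdjoint B₀) (hB₁ : IsSelfAdjoint B₁)
    (hA₀sq : A₀ * A₀ ≤ 1) (hA₁sq : A₁ * A₁ ≤ 1) (hB₀sq : B₀ * B₀ ≤ 1) (hB₁sq : B₁ * B₁ ≤ 1)
    (h₀₀ : Commute A₀ B₀) (h₀₁ : Commute A₀ B₁) (h₁₀ : Commute A₁ B₀) (h₁₁ : Commute A₁ B₁) :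
    chsh A₀ A₁ B₀ B₁ ∈ Set.Icc (-(2 * √2) • 1) ((2 * √2) • 1) := by
  refine ⟨?_, chsh_le_two_sqrt_two hA₀ hA₁ hB₀ hB₁ hA₀sq hA₁sq hB₀sq hB₁sq h₀₀ h₀₁ h₁₀ h₁₁⟩
  have h := chsh_le_two_sqrt_two hA₀ hA₁ hB₀.neg hB₁.neg hA₀sq hA₁sq
    (by rwa [neg_mul_neg]) (by rwa [neg_mul_neg])
    h₀₀.neg_right h₀₁.neg_right h₁₀.neg_right h₁₁.neg_right
  rwa [chsh_neg_right, neg_le, ← neg_smul] at h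

end OrderedStarAlgebra

theorem Complex.norm_le_of_mem_Icc {z : ℂ} {c : ℝ} (hz : z ∈ Set.Icc (-c : ℂ) c) : ‖z‖ ≤ c := by
  obtain ⟨hlow, hup⟩ := hz
  lift z to ℝ using (Complex.le_def.mp hup).2.trans (Complex.ofReal_im c)
  rw [Complex.norm_real, Real.norm_eq_abs, abs_le]
  exact ⟨by exact_mod_cast hlow, by exact_mod_cast hup⟩

namespace Matrix

variable {n m : Type*}

section Kronecker

variable {α : Type*} [CommRing α]

theorem sub_kronecker (A₁ A₂ : Matrix n n α) (B : Matrix m m α) :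
    (A₁ - A₂) ⊗ₖ B = A₁ ⊗ₖ B - A₂ ⊗ₖ B :=
  ext fun _ _ => sub_mul _ _ _

theorem kronecker_sub (A : Matrix n n α) (B₁ B₂ : Matrix m m α) :
    A ⊗ₖ (B₁ - B₂) = A ⊗ₖ B₁ - A ⊗ₖ B₂ :=
  ext fun _ _ => mul_sub _ _ _

theorem IsHermitian.kronecker [StarRing α] {A : Matrix n n α} {B : Matrix m m α}
    (hA : A.IsHermitian) (hB : B.IsHermitian) : (A ⊗ₖ B).IsHermitian := by
  rw [IsHermitian, conjTranspose_kronecker, hA.eq, hB.eq]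

variable [Fintype n] [Fintype m] [DecidableEq n] [DecidableEq m]

theorem kronecker_one_mul_one_kronecker (A : Matrix n n α) (B : Matrix m m α) :
    (A ⊗ₖ (1 : Matrix m m α)) * ((1 : Matrix n n α) ⊗ₖ B) = A ⊗ₖ B := by
  rw [← mul_kronecker_mul, Matrix.mul_one, Matrix.one_mul]

theorem commute_kronecker_one_one_kronecker (A : Matrix n n α) (B : Matrix m m α) :
    Commute (A ⊗ₖ (1 : Matrix m m α)) ((1 : Matrix n n α) ⊗ₖ B) := by
  rw [Commute, SemiconjBy, kronecker_one_mul_one_kronecker, ← mul_kronecker_mul,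
    Matrix.mul_one, Matrix.one_mul]

end Kronecker

open scoped MatrixOrder

section Trace

variable {k : Type*} [Fintype k] [DecidableEq k]

theorem PosSemidef.trace_mul_nonneg {𝕜 : Type*} [RCLike 𝕜] {ρ X : Matrix k k 𝕜}
    (hρ : ρ.PosSemidef) (hX : 0 ≤ X) : 0 ≤ (ρ * X).trace := by
  obtain ⟨C, rfl⟩ := CStarAlgebra.nonneg_iff_eq_star_mul_self.mp hρ.nonneg
  rw [Matrix.mul_assoc, trace_mul_comm]
  exact (nonneg_iff_posSemidef.mp (star_right_conjugate_nonneg hX C)).trace_nonneg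

theorem PosSemidef.norm_trace_mul_le_of_mem_Icc {ρ : Matrix k k ℂ} (hρ : ρ.PosSemidef)
    (hρtr : ρ.trace = 1) {c : ℝ} {X : Matrix k k ℂ} (hX : X ∈ Set.Icc (-c • 1) (c • 1)) :
    ‖(ρ * X).trace‖ ≤ c := by
  have trace_mul_le {Y : Matrix k k ℂ} (hY : Y ≤ c • 1) : (ρ * Y).trace ≤ c := by
    have h := hρ.trace_mul_nonneg (sub_nonneg.mpr hY)
    rwa [Matrix.mul_sub, trace_sub, Matrix.mul_smul, Matrix.mul_one, trace_smul, hρtr,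
      Complex.real_smul, mul_one, sub_nonneg] at h
  have hlow := trace_mul_le (Y := -X) (by rw [neg_le, ← neg_smul]; exact hX.1)
  rw [Matrix.mul_neg, trace_neg, neg_le] at hlow
  exact Complex.norm_le_of_mem_Icc ⟨hlow, trace_mul_le hX.2⟩

end Trace

variable [Fintype n] [Fintype m] [DecidableEq n] [DecidableEq m]

theorem kronecker_one_mul_self_le_one {A : Matrix n n ℂ} (hA : A * A ≤ 1) :
    (A ⊗ₖ (1 : Matrix m m ℂ)) * (A ⊗ₖ 1) ≤ 1 := by
  rw [le_iff, ← mul_kronecker_mul, Matrix.one_mul, ← one_kronecker_one, ← sub_kronecker]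
  exact (le_iff.mp hA).kronecker PosSemidef.one

theorem one_kronecker_mul_self_le_one {B : Matrix m m ℂ} (hB : B * B ≤ 1) :
    ((1 : Matrix n n ℂ) ⊗ₖ B) * (1 ⊗ₖ B) ≤ 1 := by
  rw [le_iff, ← mul_kronecker_mul, Matrix.one_mul, ← one_kronecker_one, ← kronecker_sub]
  exact PosSemidef.one.kronecker (le_iff.mp hB)

theorem chsh_kronecker_mem_Icc {A₀ A₁ : Matrix n n ℂ} {B₀ B₁ : Matrix m m ℂ}
    (hA₀ : A₀.IsHermitian) (hA₁ : A₁.IsHermitian) (hB₀ : B₀.IsHermitian) (hB₁ : B₁.IsHermitian)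
    (hA₀sq : A₀ * A₀ ≤ 1) (hA₁sq : A₁ * A₁ ≤ 1) (hB₀sq : B₀ * B₀ ≤ 1) (hB₁sq : B₁ * B₁ ≤ 1) :
    A₀ ⊗ₖ B₀ + A₀ ⊗ₖ B₁ + A₁ ⊗ₖ B₀ - A₁ ⊗ₖ B₁ ∈ Set.Icc (-(2 * √2) • 1) ((2 * √2) • 1) := by
  simpa only [chsh, kronecker_one_mul_one_kronecker] using
    chsh_mem_Icc (hA₀.kronecker isHermitian_one).isSelfAdjoint
      (hA₁.kronecker isHermitian_one).isSelfAdjoint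
      (isHermitian_one.kronecker hB₀).isSelfAdjoint (isHermitian_one.kronecker hB₁).isSelfAdjoint
      (kronecker_one_mul_self_le_one (m := m) hA₀sq) (kronecker_one_mul_self_le_one hA₁sq)
      (one_kronecker_mul_self_le_one (n := n) hB₀sq) (one_kronecker_mul_self_le_one hB₁sq)
      (commute_kronecker_one_one_kronecker _ _) (commute_kronecker_one_one_kronecker _ _)
      (commute_kronecker_one_one_kronecker _ _) (commute_kronecker_one_one_kronecker _ _)

end Matrix

/-- Tsirelson's bound: for a bipartite quantum state `ρ` and Hermitian
observables `A₀, A₁, B₀, B₁` with eigenvalues in `[-1,1]` (expressed as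
`1 - A² ⪰ 0`), the expectation of the CHSH operator is at most `2√2` in
absolute value. -/
theorem tsirelson_bound
    {n m : Type*} [Fintype n] [Fintype m] [DecidableEq n] [DecidableEq m]
    (ρ : Matrix (n × m) (n × m) ℂ)
    (hρ : ρ.PosSemidef) (hρtr : ρ.trace = 1)
    (A₀ A₁ : Matrix n n ℂ) (B₀ B₁ : Matrix m m ℂ)
    (hA₀ : A₀.IsHermitian) (hA₁ : A₁.IsHermitian)
    (hB₀ : B₀.IsHermitian) (hB₁ : B₁.IsHermitian)
    (hA₀sq : (1 - A₀ * A₀).PosSemidef) (hA₁sq : (1 - A₁ * A₁).PosSemidef)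
    (hB₀sq : (1 - B₀ * B₀).PosSemidef) (hB₁sq : (1 - B₁ * B₁).PosSemidef) :
    ‖(ρ * (A₀ ⊗ₖ B₀ + A₀ ⊗ₖ B₁ + A₁ ⊗ₖ B₀ - A₁ ⊗ₖ B₁)).trace‖
      ≤ 2 * Real.sqrt 2 :=
  hρ.norm_trace_mul_le_of_mem_Icc hρtr
    (Matrix.chsh_kronecker_mem_Icc hA₀ hA₁ hB₀ hB₁ hA₀sq hA₁sq hB₀sq hB₁sq)
end
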